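/- Let D ⊆ ℝⁿ be a nonempty finite set of nonzero vectors. If CM(D) ≠ CM_D(D), then pspan(D) = span(D) and span(D) ≠ ℝⁿ. -/

import Mathlib

open scoped RealInnerProductSpace

noncomputable section

/-- The positive span of a set `D`: all finite nonnegative linear combinations
of elements of `D`. -/
def pspan {E : Type*} [AddCommGroup E] [Module ℝ E] (D : Set E) : Set E :=
  {x | ∃ (k : ℕ) (d : Fin k → E) (c : Fin k → ℝ),
    (∀ i, d i ∈ D) ∧ (∀ i, 0 ≤ c i) ∧ x = ∑ i, c i • d i}

/-- The cosine measure of `D` relative to a subspace `L`: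
`min` over unit vectors `u ∈ L` of `sup_{d ∈ D} ⟪u, d⟫ / ‖d‖`. -/
noncomputable def cmRel {E : Type*} [NormedAddCommGroup E] [InnerProductSpace ℝ E]
    (L : Submodule ℝ E) (D : Set E) : ℝ :=
  sInf ((fun u => sSup ((fun d => ⟪u, d⟫ / ‖d‖) '' D)) '' {u : E | u ∈ L ∧ ‖u‖ = 1})

/-- The cosine vector set of `D` relative to a subspace `L`: the set of unit
vectors `u ∈ L` attaining the minimum defining `cmRel L D`. -/
noncomputable def cVRel {E : Type*} [NormedAddCommGroup E] [InnerProductSpace ℝ E]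
    (L : Submodule ℝ E) (D : Set E) : Set E :=
  {u : E | u ∈ L ∧ ‖u‖ = 1 ∧ sSup ((fun d => ⟪u, d⟫ / ‖d‖) '' D) = cmRel L D}


/-! If `span D = ⊤` the two cosine measures agree trivially. Otherwise write `K = span D`. If
`cm_K(D) ≤ 0`, then for a unit vector `v` the orthogonal projection `p` of `v` onto `K` has the
same inner products with `D`, and `p = ‖p‖ • w` with `w` a unit vector of `K` and `‖p‖ ≤ 1`,
so `max_d ⟪v, d⟫/‖d‖ = ‖p‖ · max_d ⟪w, d⟫/‖d‖ ≥ cm_K(D)`; hence `cm(D) = cm_K(D)`. So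
`cm_K(D) > 0`, i.e. every nonzero `u ∈ K` has `⟪u, d⟫ > 0` for some `d ∈ D`. By Farkas' lemma
the closure of the cone generated by `D` is then all of `K`, and a dense convex set in a
finite-dimensional space is the whole space. -/

theorem pspan_eq_hull {E : Type*} [AddCommGroup E] [Module ℝ E] (D : Set E) :
    pspan D = PointedCone.hull ℝ D := by
  ext x
  simp only [SetLike.mem_coe, Submodule.mem_span_set']
  constructor
  · rintro ⟨k, d, c, hdD, hc, rfl⟩
    exact ⟨k, fun i => ⟨c i, hc i⟩, fun i => ⟨d i, hdD i⟩, rfl⟩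
  · rintro ⟨k, c, d, rfl⟩
    exact ⟨k, fun i => d i, fun i => c i, fun i => (d i).2, fun i => (c i).2, rfl⟩

theorem Convex.eq_univ_of_dense {E : Type*} [NormedAddCommGroup E] [NormedSpace ℝ E]
    [FiniteDimensional ℝ E] {s : Set E} (hs : Convex ℝ s) (hd : Dense s) : s = Set.univ := by
  have hspan : affineSpan ℝ s = ⊤ := by
    refine (AffineSubspace.coe_eq_univ_iff _).1 (Set.eq_univ_of_univ_subset ?_)
    rw [← hd.closure_eq]
    exact closure_minimal (subset_affineSpan ℝ s) (affineSpan ℝ s).closed_of_finiteDimensional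
  have hint : interior s = Set.univ := by
    rw [← hs.interior_closure_eq_interior_of_nonempty_interior
      (hs.interior_nonempty_iff_affineSpan_eq_top.2 hspan), hd.closure_eq, interior_univ]
  exact Set.eq_univ_of_univ_subset (hint ▸ interior_subset)

section InnerProductSpace

variable {E : Type*} [NormedAddCommGroup E] [InnerProductSpace ℝ E]

theorem PointedCone.hull_eq_top_of_forall_exists_inner_pos [FiniteDimensional ℝ E] {D : Set E}
    (hD : ∀ u ≠ 0, ∃ d ∈ D, 0 < ⟪u, d⟫) : PointedCone.hull ℝ D = ⊤ := by
  set C := PointedCone.hull ℝ D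
  have hdense : Dense (C : Set E) := by
    refine fun x => by_contra fun hx => ?_
    obtain ⟨y, hCy, hxy⟩ := ProperCone.hyperplane_separation' (C := Submodule.closure C) hx
    have hy : -y ≠ 0 := by
      rintro hy
      simp [neg_eq_zero.1 hy] at hxy
    obtain ⟨d, hd, hdy⟩ := hD (-y) hy
    have := hCy d (subset_closure (PointedCone.subset_hull hd))
    rw [inner_neg_left, real_inner_comm] at hdy
    linarith
  exact SetLike.coe_injective (C.convex.eq_univ_of_dense hdense)

theorem pspan_eq_span_of_forall_exists_inner_pos {D : Set E}
    [FiniteDimensional ℝ (Submodule.span ℝ D)]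
    (hD : ∀ u ∈ Submodule.span ℝ D, u ≠ 0 → ∃ d ∈ D, 0 < ⟪u, d⟫) :
    pspan D = Submodule.span ℝ D := by
  set K := Submodule.span ℝ D
  have hhull : PointedCone.hull ℝ (Subtype.val ⁻¹' D : Set K) = ⊤ := by
    refine PointedCone.hull_eq_top_of_forall_exists_inner_pos fun u hu => ?_
    obtain ⟨d, hd, hud⟩ := hD u u.2 (by simpa using hu)
    exact ⟨⟨d, Submodule.subset_span hd⟩, hd, hud⟩
  have himage : K.subtype '' (Subtype.val ⁻¹' D) = D := by
    refine Set.image_preimage_eq_of_subset ?_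
    rw [K.coe_subtype, Subtype.range_coe]
    exact Submodule.subset_span
  have hmap : PointedCone.hull ℝ (K.subtype '' (Subtype.val ⁻¹' D)) =
      (PointedCone.hull ℝ (Subtype.val ⁻¹' D : Set K)).map K.subtype :=
    (Submodule.map_span (K.subtype : K →ₗ[NNReal] E) _).symm
  rw [pspan_eq_hull, ← himage, hmap, hhull, PointedCone.coe_map, Submodule.top_coe,
    Set.image_univ, K.coe_subtype, Subtype.range_coe]

def maxCos (D : Set E) (u : E) : ℝ :=
  sSup ((fun d => ⟪u, d⟫ / ‖d‖) '' D)

variable {D : Set E}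

open scoped Pointwise in
theorem maxCos_smul {c : ℝ} (hc : 0 ≤ c) (u : E) : maxCos D (c • u) = c * maxCos D u := by
  have : (fun d => ⟪c • u, d⟫ / ‖d‖) '' D = c • (fun d => ⟪u, d⟫ / ‖d‖) '' D := by
    rw [← Set.image_smul, Set.image_image]
    simp only [real_inner_smul_left, smul_eq_mul, mul_div_assoc]
  rw [maxCos, this, Real.sSup_smul_of_nonneg hc, smul_eq_mul, maxCos]

theorem maxCos_zero : maxCos D 0 = 0 := by
  simpa using maxCos_smul (D := D) le_rfl 0

theorem maxCos_congr {u v : E} (h : ∀ d ∈ D, ⟪u, d⟫ = ⟪v, d⟫) : maxCos D u = maxCos D v := by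
  unfold maxCos
  rw [Set.image_congr fun d hd => by rw [h d hd]]

theorem exists_inner_pos_of_maxCos_pos {u : E} (hu : 0 < maxCos D u) : ∃ d ∈ D, 0 < ⟪u, d⟫ := by
  by_contra! hD
  refine hu.not_ge (Real.sSup_nonpos ?_)
  rintro _ ⟨d, hd, rfl⟩
  exact div_nonpos_of_nonpos_of_nonneg (hD d hd) (norm_nonneg d)

theorem neg_one_le_maxCos (hne : D.Nonempty) (hfin : D.Finite) {u : E} (hu : ‖u‖ = 1) :
    -1 ≤ maxCos D u := by
  obtain ⟨d, hd⟩ := hne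
  refine le_csSup_of_le (hfin.image _).bddAbove ⟨d, hd, rfl⟩ ?_
  have := abs_real_inner_div_norm_mul_norm_le_one u d
  rw [hu, one_mul] at this
  exact neg_le_of_abs_le this

theorem bddBelow_maxCos_image (hne : D.Nonempty) (hfin : D.Finite) (L : Submodule ℝ E) :
    BddBelow (maxCos D '' {u | u ∈ L ∧ ‖u‖ = 1}) :=
  ⟨-1, by rintro _ ⟨v, ⟨-, hv⟩, rfl⟩; exact neg_one_le_maxCos hne hfin hv⟩

theorem cmRel_le_maxCos (hne : D.Nonempty) (hfin : D.Finite) {L : Submodule ℝ E} {u : E}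
    (huL : u ∈ L) (hu : ‖u‖ = 1) : cmRel L D ≤ maxCos D u :=
  csInf_le (bddBelow_maxCos_image hne hfin L) ⟨u, ⟨huL, hu⟩, rfl⟩

theorem cmRel_le_cmRel (hne : D.Nonempty) (hfin : D.Finite) {L L' : Submodule ℝ E}
    (hLL' : L ≤ L') {u : E} (huL : u ∈ L) (hu : ‖u‖ = 1) : cmRel L' D ≤ cmRel L D :=
  csInf_le_csInf (bddBelow_maxCos_image hne hfin L') ⟨_, ⟨u, ⟨huL, hu⟩, rfl⟩⟩
    (Set.image_mono fun _ hv => ⟨hLL' hv.1, hv.2⟩)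

theorem cmRel_le_maxCos_of_norm_le_one (hne : D.Nonempty) (hfin : D.Finite)
    {K : Submodule ℝ E} (hK : cmRel K D ≤ 0) {p : E} (hpK : p ∈ K) (hp : ‖p‖ ≤ 1) :
    cmRel K D ≤ maxCos D p := by
  rcases eq_or_ne p 0 with rfl | hp0
  · rwa [maxCos_zero]
  have hw := cmRel_le_maxCos hne hfin (K.smul_mem ‖p‖⁻¹ hpK) (norm_smul_inv_norm hp0)
  rw [← smul_inv_smul₀ (norm_ne_zero_iff.2 hp0) p, maxCos_smul (norm_nonneg p)]
  nlinarith [norm_nonneg p]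

theorem cmRel_top_eq_of_nonpos (hne : D.Nonempty) (hfin : D.Finite) (h0 : (0 : E) ∉ D)
    (K : Submodule ℝ E) [K.HasOrthogonalProjection] (hDK : D ⊆ K) (hK : cmRel K D ≤ 0) :
    cmRel ⊤ D = cmRel K D := by
  obtain ⟨d, hd⟩ := id hne
  have hunit := norm_smul_inv_norm (𝕜 := ℝ) (ne_of_mem_of_not_mem hd h0)
  refine le_antisymm (cmRel_le_cmRel hne hfin le_top (K.smul_mem _ (hDK hd)) hunit) ?_
  refine le_csInf ⟨_, ⟨_, ⟨trivial, hunit⟩, rfl⟩⟩ ?_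
  rintro _ ⟨v, ⟨-, hv⟩, rfl⟩
  change cmRel K D ≤ maxCos D v
  have hproj : ∀ d ∈ D, ⟪v, d⟫ = ⟪K.starProjection v, d⟫ := fun d hd => by
    have := K.starProjection_inner_eq_zero v d (hDK hd)
    rwa [inner_sub_left, sub_eq_zero] at this
  rw [maxCos_congr hproj]
  exact cmRel_le_maxCos_of_norm_le_one hne hfin hK (K.starProjection_apply_mem v)
    (hv ▸ K.norm_starProjection_apply_le v)

theorem exists_inner_pos_of_cmRel_pos (hne : D.Nonempty) (hfin : D.Finite)
    {K : Submodule ℝ E} (hpos : 0 < cmRel K D) {u : E} (huK : u ∈ K) (hu0 : u ≠ 0) :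
    ∃ d ∈ D, 0 < ⟪u, d⟫ := by
  refine exists_inner_pos_of_maxCos_pos ?_
  have := cmRel_le_maxCos hne hfin (K.smul_mem ‖u‖⁻¹ huK) (norm_smul_inv_norm hu0)
  rw [← smul_inv_smul₀ (norm_ne_zero_iff.2 hu0) u, maxCos_smul (norm_nonneg u)]
  exact mul_pos (norm_pos_iff.2 hu0) (hpos.trans_le this)

end InnerProductSpace

theorem stmt12 {n : ℕ} (D : Set (EuclideanSpace ℝ (Fin n))) (hne : D.Nonempty)
    (hfin : D.Finite) (h0 : (0 : EuclideanSpace ℝ (Fin n)) ∉ D)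
    (h : cmRel (⊤ : Submodule ℝ (EuclideanSpace ℝ (Fin n))) D ≠
      cmRel (Submodule.span ℝ D) D) :
    pspan D = (Submodule.span ℝ D : Set (EuclideanSpace ℝ (Fin n))) ∧
      Submodule.span ℝ D ≠ (⊤ : Submodule ℝ (EuclideanSpace ℝ (Fin n))) := by
  have : FiniteDimensional ℝ (Submodule.span ℝ D) := FiniteDimensional.span_of_finite ℝ hfin
  have hpos : 0 < cmRel (Submodule.span ℝ D) D := by
    by_contra! hle
    exact h (cmRel_top_eq_of_nonpos hne hfin h0 _ Submodule.subset_span hle)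
  refine ⟨pspan_eq_span_of_forall_exists_inner_pos
    fun u hu hu0 => exists_inner_pos_of_cmRel_pos hne hfin hpos hu hu0, ?_⟩
  rintro htop
  exact h (by rw [htop])
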